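/- Let r ≥ 1 be an integer and let α₁ < -r/2 and α₂ < -r/2 be real numbers. Then there exists a constant C > 0 (depending only on r, α₁, α₂) such that for all reals A > 0 and B > 0, the integral ∫_{(0,∞)^r} (y₁+…+y_r+A)^{α₁} (y₁+…+y_r+B)^{α₂} dy₁…dy_r is finite and bounded by C·A^{α₁+r/2}·B^{α₂+r/2}. -/

import Mathlib

open MeasureTheory

/-- The open positive orthant in `ℝ^r`. -/
def posOrthant (r : ℕ) : Set (Fin r → ℝ) := {y | ∀ i, 0 < y i}

/-! For `β < -r` the pure integral can be computed exactly by integrating out one coordinate at a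
time: `∫_{(0,∞)^r} (∑ yᵢ + A)^β dy = c(β, r) A^(β + r)`, each step being the one-dimensional
`∫_0^∞ (t + A)^γ dt = A^(γ + 1) / (-(γ + 1))`. The Cauchy–Schwarz inequality on the orthant then
bounds the mixed integral by the geometric mean of the pure integrals with exponents `2α₁` and
`2α₂`, which is `√(c(2α₁, r) c(2α₂, r)) A^(α₁ + r/2) B^(α₂ + r/2)`. -/

open Set
open scoped ENNReal

lemma measurableSet_posOrthant (r : ℕ) : MeasurableSet (posOrthant r) := by
  unfold posOrthant; measurability

lemma sum_add_pos_of_mem_posOrthant {r : ℕ} {y : Fin r → ℝ} (hy : y ∈ posOrthant r) {A : ℝ}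
    (hA : 0 < A) : 0 < ∑ i, y i + A :=
  add_pos_of_nonneg_of_pos (Finset.sum_nonneg fun i _ => (hy i).le) hA

lemma cons_mem_posOrthant_iff {r : ℕ} {t : ℝ} {u : Fin r → ℝ} :
    (Fin.cons t u : Fin (r + 1) → ℝ) ∈ posOrthant (r + 1) ↔ 0 < t ∧ u ∈ posOrthant r :=
  Fin.forall_fin_succ

lemma setLIntegral_posOrthant_succ {r : ℕ} {g : (Fin (r + 1) → ℝ) → ℝ≥0∞} (hg : Measurable g) :
    ∫⁻ y in posOrthant (r + 1), g y = ∫⁻ t in Ioi 0, ∫⁻ u in posOrthant r, g (Fin.cons t u) := by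
  let e := (MeasurableEquiv.piFinSuccAbove (fun _ : Fin (r + 1) => ℝ) 0).symm
  have he : ∀ z, e z = Fin.cons z.1 z.2 := fun z => Fin.insertNth_zero' z.1 z.2
  have hpre : e ⁻¹' posOrthant (r + 1) = Ioi 0 ×ˢ posOrthant r := by
    ext z; simp only [mem_preimage, he, cons_mem_posOrthant_iff, mem_prod, mem_Ioi]
  have he_vol := (volume_preserving_piFinSuccAbove (fun _ : Fin (r + 1) => ℝ) 0).symm
  rw [← he_vol.setLIntegral_comp_preimage_emb e.measurableEmbedding, hpre,
    Measure.volume_eq_prod, ← Measure.prod_restrict,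
    lintegral_prod (fun z => g (e z)) (hg.comp e.measurable).aemeasurable]
  simp only [he]

lemma lintegral_Ioi_add_rpow {β A : ℝ} (hβ : β < -1) (hA : 0 < A) :
    ∫⁻ t in Ioi 0, ENNReal.ofReal ((t + A) ^ β) = ENNReal.ofReal (A ^ (β + 1) / -(β + 1)) := by
  have hpre : (· + A) ⁻¹' Ioi A = Ioi 0 := by ext; simp
  rw [← hpre, (measurePreserving_add_right volume A).setLIntegral_comp_preimage_emb
    (measurableEmbedding_addRight A) (fun t => ENNReal.ofReal (t ^ β)),
    ← ofReal_integral_eq_lintegral_ofReal (integrableOn_Ioi_rpow_of_lt hβ hA),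
    integral_Ioi_rpow_of_lt hβ hA, neg_div, div_neg]
  filter_upwards [ae_restrict_mem measurableSet_Ioi] with t ht
  exact Real.rpow_nonneg (hA.trans ht).le β

/-- Integrating `(t + A) ^ (β + k)` over `t > 0` produces the factor `(-(β + k + 1))⁻¹`, one for
each of the `r` coordinates; in closed form this is `Γ(-β - r) / Γ(-β)`. -/
noncomputable def orthantRpowConst (β : ℝ) (r : ℕ) : ℝ :=
  ∏ k ∈ Finset.range r, (-(β + k + 1))⁻¹

lemma orthantRpowConst_succ (β : ℝ) (r : ℕ) :
    orthantRpowConst β (r + 1) = orthantRpowConst β r * (-(β + r + 1))⁻¹ :=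
  Finset.prod_range_succ _ r

lemma orthantRpowConst_pos {β : ℝ} {r : ℕ} (hβ : β < -r) : 0 < orthantRpowConst β r := by
  refine Finset.prod_pos fun k hk => inv_pos.2 ?_
  have : (k : ℝ) + 1 ≤ r := by exact_mod_cast Finset.mem_range.1 hk
  linarith

lemma lintegral_posOrthant_sum_add_rpow (r : ℕ) {β A : ℝ} (hβ : β < -r) (hA : 0 < A) :
    ∫⁻ y in posOrthant r, ENNReal.ofReal ((∑ i, y i + A) ^ β)
      = ENNReal.ofReal (orthantRpowConst β r * A ^ (β + r)) := by
  induction r generalizing A with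
  | zero =>
    have : posOrthant 0 = univ := eq_univ_of_forall fun y i => i.elim0
    simp [this, orthantRpowConst, volume_pi]
  | succ r ih =>
    push_cast at hβ
    have hβr : β < -r := by linarith
    calc ∫⁻ y in posOrthant (r + 1), ENNReal.ofReal ((∑ i, y i + A) ^ β)
        = ∫⁻ t in Ioi 0, ∫⁻ u in posOrthant r, ENNReal.ofReal ((∑ i, u i + (t + A)) ^ β) := by
          rw [setLIntegral_posOrthant_succ (by fun_prop)]
          simp only [Fin.sum_cons, add_assoc, add_left_comm]
      _ = ∫⁻ t in Ioi 0,
            ENNReal.ofReal (orthantRpowConst β r) * ENNReal.ofReal ((t + A) ^ (β + r)) := by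
          refine setLIntegral_congr_fun measurableSet_Ioi fun t ht => ?_
          rw [ih hβr (add_pos ht hA), ENNReal.ofReal_mul (orthantRpowConst_pos hβr).le]
      _ = ENNReal.ofReal (orthantRpowConst β (r + 1) * A ^ (β + (r + 1 : ℕ))) := by
          rw [lintegral_const_mul _ (by fun_prop), lintegral_Ioi_add_rpow (by linarith) hA,
            ← ENNReal.ofReal_mul (orthantRpowConst_pos hβr).le, orthantRpowConst_succ]
          push_cast
          ring_nf

section Integral

variable {r : ℕ} {β A : ℝ}

lemma sum_add_rpow_nonneg_ae (hA : 0 < A) :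
    0 ≤ᵐ[volume.restrict (posOrthant r)] fun y : Fin r → ℝ => (∑ i, y i + A) ^ β :=
  ae_restrict_of_forall_mem (measurableSet_posOrthant r) fun _ hy =>
    Real.rpow_nonneg (sum_add_pos_of_mem_posOrthant hy hA).le β

lemma integrableOn_posOrthant_sum_add_rpow (hβ : β < -r) (hA : 0 < A) :
    IntegrableOn (fun y : Fin r → ℝ => (∑ i, y i + A) ^ β) (posOrthant r) := by
  refine ⟨Measurable.aestronglyMeasurable (by fun_prop), ?_⟩
  rw [hasFiniteIntegral_iff_ofReal (sum_add_rpow_nonneg_ae hA),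
    lintegral_posOrthant_sum_add_rpow r hβ hA]
  exact ENNReal.ofReal_lt_top

lemma integral_posOrthant_sum_add_rpow (hβ : β < -r) (hA : 0 < A) :
    ∫ y in posOrthant r, (∑ i, y i + A) ^ β = orthantRpowConst β r * A ^ (β + r) := by
  rw [integral_eq_lintegral_of_nonneg_ae (sum_add_rpow_nonneg_ae hA)
    (Measurable.aestronglyMeasurable (by fun_prop)), lintegral_posOrthant_sum_add_rpow r hβ hA,
    ENNReal.toReal_ofReal (mul_pos (orthantRpowConst_pos hβ) (Real.rpow_pos_of_pos hA _)).le]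

lemma sum_add_rpow_sq_eqOn {α : ℝ} (hA : 0 < A) :
    EqOn (fun y : Fin r → ℝ => ((∑ i, y i + A) ^ α) ^ 2) (fun y => (∑ i, y i + A) ^ (2 * α))
      (posOrthant r) := fun y hy => by
  dsimp only
  rw [mul_comm, Real.rpow_mul (sum_add_pos_of_mem_posOrthant hy hA).le, Real.rpow_two]

lemma memLp_two_posOrthant_sum_add_rpow {α : ℝ} (hα : 2 * α < -r) (hA : 0 < A) :
    MemLp (fun y : Fin r → ℝ => (∑ i, y i + A) ^ α) 2 (volume.restrict (posOrthant r)) :=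
  (memLp_two_iff_integrable_sq (Measurable.aestronglyMeasurable (by fun_prop))).2 <|
    (integrableOn_posOrthant_sum_add_rpow hα hA).congr_fun
      (sum_add_rpow_sq_eqOn hA).symm (measurableSet_posOrthant r)

lemma integral_posOrthant_sum_add_rpow_sq {α : ℝ} (hα : 2 * α < -r) (hA : 0 < A) :
    ∫ y in posOrthant r, ((∑ i, y i + A) ^ α) ^ 2
      = orthantRpowConst (2 * α) r * A ^ (2 * α + r) := by
  rw [setIntegral_congr_fun (measurableSet_posOrthant r) (sum_add_rpow_sq_eqOn hA),
    integral_posOrthant_sum_add_rpow hα hA]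

end Integral

theorem stmt_6_general (r : ℕ) (α₁ α₂ : ℝ)
    (h1 : α₁ < -(r : ℝ)/2) (h2 : α₂ < -(r : ℝ)/2) :
    ∃ C : ℝ, 0 < C ∧ ∀ A B : ℝ, 0 < A → 0 < B →
      IntegrableOn
        (fun y : Fin r → ℝ => (∑ i, y i + A) ^ α₁ * (∑ i, y i + B) ^ α₂)
        (posOrthant r) ∧
      ∫ y in posOrthant r, (∑ i, y i + A) ^ α₁ * (∑ i, y i + B) ^ α₂
        ≤ C * A ^ (α₁ + r/2) * B ^ (α₂ + r/2) := by
  have h2α₁ : 2 * α₁ < -r := by linarith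
  have h2α₂ : 2 * α₂ < -r := by linarith
  have sqrt_rpow : ∀ {A α : ℝ}, 0 < A → √(A ^ (2 * α + r)) = A ^ (α + r / 2) := fun hA => by
    rw [Real.sqrt_eq_rpow, ← Real.rpow_mul hA.le]
    ring_nf
  have hc₁ := orthantRpowConst_pos h2α₁
  have hc₂ := orthantRpowConst_pos h2α₂
  refine ⟨√(orthantRpowConst (2 * α₁) r) * √(orthantRpowConst (2 * α₂) r), by positivity,
    fun A B hA hB => ?_⟩
  have hf := memLp_two_posOrthant_sum_add_rpow h2α₁ hA
  have hg := memLp_two_posOrthant_sum_add_rpow h2α₂ hB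
  refine ⟨hf.integrable_mul hg, ?_⟩
  calc ∫ y in posOrthant r, (∑ i, y i + A) ^ α₁ * (∑ i, y i + B) ^ α₂
      ≤ √(∫ y in posOrthant r, ((∑ i, y i + A) ^ α₁) ^ 2) *
          √(∫ y in posOrthant r, ((∑ i, y i + B) ^ α₂) ^ 2) := by
        simpa only [← Real.sqrt_eq_rpow, Real.rpow_two] using
          integral_mul_le_Lp_mul_Lq_of_nonneg .two_two
            (sum_add_rpow_nonneg_ae hA) (sum_add_rpow_nonneg_ae hB)
            (by simpa using hf) (by simpa using hg)
    _ = _ := by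
        rw [integral_posOrthant_sum_add_rpow_sq h2α₁ hA,
          integral_posOrthant_sum_add_rpow_sq h2α₂ hB,
          Real.sqrt_mul hc₁.le, Real.sqrt_mul hc₂.le, sqrt_rpow hA, sqrt_rpow hB]
        ring

/-- For an integer `r ≥ 1` and reals `α₁, α₂ < -r/2`, there is `C > 0` (depending only on
`r, α₁, α₂`) such that for all `A, B > 0` the integral
`∫_{(0,∞)^r} (y₁+…+y_r+A)^{α₁} (y₁+…+y_r+B)^{α₂} dy` is finite and at most
`C·A^{α₁+r/2}·B^{α₂+r/2}`. -/
theorem stmt_6 (r : ℕ) (hr : 1 ≤ r) (α₁ α₂ : ℝ)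
    (h1 : α₁ < -(r : ℝ)/2) (h2 : α₂ < -(r : ℝ)/2) :
    ∃ C : ℝ, 0 < C ∧ ∀ A B : ℝ, 0 < A → 0 < B →
      IntegrableOn
        (fun y : Fin r → ℝ => (∑ i, y i + A) ^ α₁ * (∑ i, y i + B) ^ α₂)
        (posOrthant r) ∧
      ∫ y in posOrthant r, (∑ i, y i + A) ^ α₁ * (∑ i, y i + B) ^ α₂
        ≤ C * A ^ (α₁ + r/2) * B ^ (α₂ + r/2) :=
  stmt_6_general r α₁ α₂ h1 h2
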